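/- Let X be a dense meager composant of a continuum Y. If there exists y ∈ Y such that X ∪ {y} is irreducible, then X is singular with respect to y. -/
import Mathlib

open Set

lemma aux_nwd_union {Y : Type*} [TopologicalSpace Y] {s t : Set Y}
    (hs : IsClosed s) (ht : IsClosed t)
    (hns : IsNowhereDense s) (hnt : IsNowhereDense t) : IsNowhereDense (s ∪ t) := by
  have hds : Dense sᶜ := (isClosed_isNowhereDense_iff_compl.mp ⟨hs, hns⟩).2
  have hdt : Dense tᶜ := (isClosed_isNowhereDense_iff_compl.mp ⟨ht, hnt⟩).2
  have hd : Dense (s ∪ t)ᶜ := by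
    rw [Set.compl_union]
    exact hds.inter_of_isOpen_left hdt hs.isOpen_compl
  exact (isClosed_isNowhereDense_iff_compl.mpr ⟨(hs.union ht).isOpen_compl, hd⟩).2

/-- If X ∪ {y} is irreducible for a dense meager composant X, then X is
singular with respect to y. -/
theorem stmt_11 {Y : Type*} [TopologicalSpace Y] [CompactSpace Y] [ConnectedSpace Y]
    [TopologicalSpace.MetrizableSpace Y] [Nontrivial Y]
    (x : Y) (X : Set Y) (hdense : Dense X)
    (hX : X = ⋃₀ {K : Set Y | IsCompact K ∧ IsConnected K ∧ IsNowhereDense K ∧ x ∈ K})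
    (y : Y)
    (hirr : ∃ a ∈ X ∪ {y}, ∃ b ∈ X ∪ {y},
      ∀ C : Set Y, C ⊆ X ∪ {y} → closure C ∩ (X ∪ {y}) = C → IsConnected C →
        a ∈ C → b ∈ C → C = X ∪ {y}) :
    ∀ C : Set Y, C ⊆ X → IsConnected C → y ∈ closure C → X ⊆ closure C := by
  intro C hCX hCconn hyC
  letI := TopologicalSpace.metrizableSpaceMetric Y
  obtain ⟨c, hc⟩ := hCconn.nonempty
  have hcX : c ∈ X := hCX hc
  have getK : ∀ z ∈ X, ∃ K : Set Y, IsCompact K ∧ IsConnected K ∧ IsNowhereDense K ∧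
      x ∈ K ∧ z ∈ K ∧ K ⊆ X := by
    intro z hz
    rw [hX] at hz
    obtain ⟨K, ⟨h1, h2, h3, h4⟩, hzK⟩ := hz
    exact ⟨K, h1, h2, h3, h4, hzK, by rw [hX]; exact fun w hw => ⟨K, ⟨h1, h2, h3, h4⟩, hw⟩⟩
  obtain ⟨Kc, hKc1, hKc2, hKc3, hKc4, hKc5, hKc6⟩ := getK c hcX
  set D := closure C ∩ (X ∪ {y}) with hD
  have hyD : y ∈ D := ⟨hyC, Or.inr rfl⟩
  have hCD : C ⊆ D := fun z hz => ⟨subset_closure hz, Or.inl (hCX hz)⟩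
  have hDconn : IsConnected D := hCconn.subset_closure hCD inter_subset_left
  have getK' : ∀ z ∈ X ∪ {y}, ∃ K : Set Y, IsCompact K ∧ IsConnected K ∧ IsNowhereDense K ∧
      x ∈ K ∧ K ⊆ X ∧ z ∈ D ∪ K := by
    intro z hz
    rcases hz with hz | hz
    · obtain ⟨K, h1, h2, h3, h4, h5, h6⟩ := getK z hz
      exact ⟨K, h1, h2, h3, h4, h6, Or.inr h5⟩
    · exact ⟨Kc, hKc1, hKc2, hKc3, hKc4, hKc6, Or.inl (by rw [mem_singleton_iff] at hz; rw [hz]; exact hyD)⟩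
  obtain ⟨a, ha, b, hb, hirr'⟩ := hirr
  obtain ⟨Ka, hKa1, hKa2, hKa3, hKa4, hKa6, haDK⟩ := getK' a ha
  obtain ⟨Kb, hKb1, hKb2, hKb3, hKb4, hKb6, hbDK⟩ := getK' b hb
  set E := D ∪ Kc ∪ Ka ∪ Kb with hE
  have hEconn : IsConnected E := by
    have h1 : IsPreconnected (D ∪ Kc) :=
      IsPreconnected.union c (hCD hc) hKc5 hDconn.isPreconnected hKc2.isPreconnected
    have h2 : IsPreconnected (D ∪ Kc ∪ Ka) :=
      IsPreconnected.union x (Or.inr hKc4) hKa4 h1 hKa2.isPreconnected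
    have h3 : IsPreconnected E :=
      IsPreconnected.union x (Or.inl (Or.inr hKc4)) hKb4 h2 hKb2.isPreconnected
    exact ⟨⟨y, Or.inl (Or.inl (Or.inl hyD))⟩, h3⟩
  have hEsub : E ⊆ X ∪ {y} := by
    rintro z (((hz | hz) | hz) | hz)
    · exact hz.2
    · exact Or.inl (hKc6 hz)
    · exact Or.inl (hKa6 hz)
    · exact Or.inl (hKb6 hz)
  have hEclosbig : closure E ⊆ closure C ∪ (Kc ∪ Ka ∪ Kb) := by
    apply closure_minimal _ (isClosed_closure.union
      ((hKc1.isClosed.union hKa1.isClosed).union hKb1.isClosed))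
    · rintro z (((hz | hz) | hz) | hz)
      · exact Or.inl hz.1
      · exact Or.inr (Or.inl (Or.inl hz))
      · exact Or.inr (Or.inl (Or.inr hz))
      · exact Or.inr (Or.inr hz)
  have hEclosed : closure E ∩ (X ∪ {y}) = E := by
    apply Subset.antisymm
    · rintro z ⟨hz1, hz2⟩
      rcases hEclosbig hz1 with hz | (hz | hz) | hz
      · exact Or.inl (Or.inl (Or.inl ⟨hz, hz2⟩))
      · exact Or.inl (Or.inl (Or.inr hz))
      · exact Or.inl (Or.inr hz)
      · exact Or.inr hz
    · exact fun z hz => ⟨subset_closure hz, hEsub hz⟩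
  have hEeq : E = X ∪ {y} := hirr' E hEsub hEclosed hEconn
    (by rcases haDK with h | h
        · exact Or.inl (Or.inl (Or.inl h))
        · exact Or.inl (Or.inr h))
    (by rcases hbDK with h | h
        · exact Or.inl (Or.inl (Or.inl h))
        · exact Or.inr h)
  -- Now Y = closure E ⊆ closure C ∪ N with N closed nowhere dense
  have hNnwd : IsNowhereDense (Kc ∪ Ka ∪ Kb) := aux_nwd_union ((hKc1.isClosed.union hKa1.isClosed)) hKb1.isClosed (aux_nwd_union hKc1.isClosed hKa1.isClosed hKc3 hKa3) hKb3
  have huniv : (univ : Set Y) ⊆ closure C ∪ (Kc ∪ Ka ∪ Kb) := by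
    have h1 : closure X ⊆ closure E := closure_mono (by rw [hEeq]; exact subset_union_left)
    rw [hdense.closure_eq] at h1
    exact fun z _ => hEclosbig (h1 (mem_univ z))
  have hclosC : closure C = univ := by
    by_contra h
    have hopen : IsOpen (closure C)ᶜ := isClosed_closure.isOpen_compl
    have hne : ((closure C)ᶜ : Set Y).Nonempty := by
      rw [nonempty_compl]; exact h
    have hsub : (closure C)ᶜ ⊆ closure (Kc ∪ Ka ∪ Kb) := fun z hz => by
      rcases huniv (mem_univ z) with h' | h'
      · exact absurd h' hz
      · exact subset_closure h'
    have : (closure C)ᶜ ⊆ interior (closure (Kc ∪ Ka ∪ Kb)) :=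
      interior_maximal hsub hopen
    rw [hNnwd] at this
    exact absurd (this hne.some_mem) (notMem_empty _)
  rw [hclosC]
  exact fun z _ => mem_univ z
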